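/- arXiv:1107.5110 — 2 statements merged into one kernel-verified Lean document; each statement's English description precedes it below -/
import Mathlib

section
/- Suppose X is a closed Riemannian manifold-with-time-dependent-metric, τ̄ = r², Ω ⊆ X is measurable, and l : X → ℝ satisfies l(q) ≤ (1/3)σ₊τ̄ + (1/4)Λ on Ω. If the reduced volume bound τ̄^{-m/2} ∫_X e^{-l} dμ ≤ (4π)^{m/2} holds (for the volume measure dμ at time -τ̄), then Vol_{-τ̄}(Ω) ≤ e^{(1/3)σ₊τ̄ + (1/4)Λ}(4πτ̄)^{m/2}. If moreover d/dt Vol_t(Ω) ≤ σ₋ Vol_t(Ω) on [-τ̄, 0], then Vol₀(Ω) ≤ e^{((1/3)σ₊ + σ₋)τ̄ + Λ/4}(4πτ̄)^{m/2} = (4π)^{m/2} e^{σ₋r² + σ₊r²/3 + Λ/4} r^m. -/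
open Set MeasureTheory Real

/-!
On `Ω` the integrand of the reduced volume is at least `e^{-(σ₊τ̄/3 + Λ/4)}`, so the reduced volume
bound controls `Vol_{-τ̄}(Ω)` by Markov's inequality. Gronwall's inequality for
`d/dt Vol_t(Ω) ≤ σ₋ Vol_t(Ω)` then costs a factor `e^{σ₋τ̄}` in passing from time `-τ̄` to time `0`.
-/

lemma le_mul_rpow_of_rpow_neg_mul_le {τ I b a : ℝ} (hτ : 0 < τ) (hb : 0 ≤ b)
    (h : τ ^ (-a) * I ≤ b ^ a) : I ≤ (b * τ) ^ a := by
  rw [rpow_neg hτ.le, ← div_eq_inv_mul, div_le_iff₀ (rpow_pos_of_pos hτ a)] at h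
  rwa [mul_rpow hb hτ.le]

lemma sq_rpow_natCast_div_two {r : ℝ} (hr : 0 ≤ r) (m : ℕ) :
    (r ^ 2) ^ ((m : ℝ) / 2) = r ^ m := by
  rw [← rpow_natCast r 2, ← rpow_mul hr, ← rpow_natCast r m]
  congr 1
  push_cast
  ring

section Markov

variable {X : Type*} [MeasurableSpace X] {μ : Measure X}

lemma mul_measureReal_le_integral_of_le_on {f : X → ℝ} {s : Set X} {ε : ℝ} (hε : 0 < ε)
    (hf_nonneg : 0 ≤ f) (hf : Integrable f μ) (hs : ∀ x ∈ s, ε ≤ f x) :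
    ε * μ.real s ≤ ∫ x, f x ∂μ :=
  calc ε * μ.real s ≤ ε * μ.real {x | ε ≤ f x} :=
        mul_le_mul_of_nonneg_left (measureReal_mono hs (hf.measure_ge_lt_top hε).ne) hε.le
    _ ≤ ∫ x, f x ∂μ := mul_meas_ge_le_integral_of_nonneg (ae_of_all _ hf_nonneg) hf ε

lemma measureReal_le_exp_mul_integral_exp_neg {l : X → ℝ} {s : Set X} {c : ℝ}
    (hint : Integrable (fun x => exp (-l x)) μ) (hl : ∀ x ∈ s, l x ≤ c) :
    μ.real s ≤ exp c * ∫ x, exp (-l x) ∂μ := by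
  have h := mul_measureReal_le_integral_of_le_on (exp_pos (-c)) (fun x => (exp_pos _).le) hint
    fun x hx => exp_le_exp.2 (neg_le_neg (hl x hx))
  rwa [exp_neg, inv_mul_le_iff₀ (exp_pos c)] at h

end Markov

lemma le_mul_exp_of_hasDerivAt_le_mul {V : ℝ → ℝ} {σ a b : ℝ} (hab : a ≤ b)
    (hV : ∀ t ∈ Icc a b, ∃ D, HasDerivAt V D t ∧ D ≤ σ * V t) :
    V b ≤ V a * exp (σ * (b - a)) := by
  choose! V' hV' hle using hV
  have hcont : ContinuousOn V (Icc a b) := fun t ht => (hV' t ht).continuousAt.continuousWithinAt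
  have h := le_gronwallBound_of_liminf_deriv_right_le (K := σ) (ε := 0) hcont
    (fun t ht _ hr => (hV' t (Ico_subset_Icc_self ht)).hasDerivWithinAt.liminf_right_slope_le hr)
    le_rfl (fun t ht => by simpa using hle t (Ico_subset_Icc_self ht)) b ⟨hab, le_rfl⟩
  rwa [gronwallBound_ε0] at h

theorem stmt_4_general {X : Type*} [MeasurableSpace X] (μ : Measure X)
    (Ω : Set X)
    (m : ℕ) (r τb σp σm Λ : ℝ) (hr : 0 < r) (hτb : τb = r ^ 2)
    (l : X → ℝ) (hl : ∀ x ∈ Ω, l x ≤ (1 / 3) * σp * τb + (1 / 4) * Λ)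
    (hint : Integrable (fun x => Real.exp (-l x)) μ)
    (hrv : τb ^ (-(m : ℝ) / 2) * (∫ x, Real.exp (-l x) ∂μ) ≤ (4 * π) ^ ((m : ℝ) / 2))
    (Vol : ℝ → ℝ) (hV0 : Vol (-τb) = (μ Ω).toReal)
    (hVd : ∀ t ∈ Set.Icc (-τb) (0 : ℝ), ∃ D, HasDerivAt Vol D t ∧ D ≤ σm * Vol t) :
    (μ Ω).toReal ≤ Real.exp ((1 / 3) * σp * τb + Λ / 4) * (4 * π * τb) ^ ((m : ℝ) / 2) ∧
      Vol 0 ≤ (4 * π) ^ ((m : ℝ) / 2) *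
        Real.exp (σm * r ^ 2 + σp * r ^ 2 / 3 + Λ / 4) * r ^ m := by
  have hτ : 0 < τb := hτb ▸ by positivity
  rw [neg_div] at hrv
  have hint_le := le_mul_rpow_of_rpow_neg_mul_le hτ (by positivity) hrv
  have hvol : μ.real Ω ≤ exp ((1 / 3) * σp * τb + Λ / 4) * (4 * π * τb) ^ ((m : ℝ) / 2) := by
    have h := measureReal_le_exp_mul_integral_exp_neg (c := (1 / 3) * σp * τb + Λ / 4) hint
      fun x hx => (hl x hx).trans_eq (by ring)
    exact h.trans (mul_le_mul_of_nonneg_left hint_le (exp_pos _).le)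
  refine ⟨hvol, ?_⟩
  have hgron := le_mul_exp_of_hasDerivAt_le_mul (by linarith) hVd
  rw [hV0, sub_neg_eq_add, zero_add] at hgron
  calc Vol 0 ≤ exp ((1 / 3) * σp * τb + Λ / 4) * (4 * π * τb) ^ ((m : ℝ) / 2)
        * exp (σm * τb) := hgron.trans (by gcongr; exact hvol)
    _ = (4 * π) ^ ((m : ℝ) / 2) * exp (σm * r ^ 2 + σp * r ^ 2 / 3 + Λ / 4) * r ^ m := by
        rw [mul_rpow (by positivity) hτ.le, hτb, sq_rpow_natCast_div_two hr.le,
          show σm * r ^ 2 + σp * r ^ 2 / 3 + Λ / 4 = (1 / 3) * σp * r ^ 2 + Λ / 4 + σm * r ^ 2 by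
            ring, exp_add _ (σm * r ^ 2)]
        ring

/-- Volume upper bound from the reduced volume: if the reduced distance `l` satisfies
`l ≤ σ₊τ̄/3 + Λ/4` on `Ω` and the reduced volume is at most `(4π)^{m/2}`, then
`Vol_{-τ̄}(Ω) ≤ e^{σ₊τ̄/3 + Λ/4}(4πτ̄)^{m/2}`; and if moreover `d/dt Vol_t(Ω) ≤ σ₋ Vol_t(Ω)`
on `[-τ̄,0]`, then `Vol₀(Ω) ≤ (4π)^{m/2} e^{σ₋r² + σ₊r²/3 + Λ/4} r^m` where `τ̄ = r²`. -/
theorem stmt_4 {X : Type*} [MeasurableSpace X] (μ : Measure X)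
    (Ω : Set X) (hΩ : MeasurableSet Ω)
    (m : ℕ) (r τb σp σm Λ : ℝ) (hr : 0 < r) (hτb : τb = r ^ 2)
    (l : X → ℝ) (hl : ∀ x ∈ Ω, l x ≤ (1 / 3) * σp * τb + (1 / 4) * Λ)
    (hint : Integrable (fun x => Real.exp (-l x)) μ)
    (hrv : τb ^ (-(m : ℝ) / 2) * (∫ x, Real.exp (-l x) ∂μ) ≤ (4 * π) ^ ((m : ℝ) / 2))
    (Vol : ℝ → ℝ) (hV0 : Vol (-τb) = (μ Ω).toReal)
    (hVd : ∀ t ∈ Set.Icc (-τb) (0 : ℝ), ∃ D, HasDerivAt Vol D t ∧ D ≤ σm * Vol t) :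
    (μ Ω).toReal ≤ Real.exp ((1 / 3) * σp * τb + Λ / 4) * (4 * π * τb) ^ ((m : ℝ) / 2) ∧
      Vol 0 ≤ (4 * π) ^ ((m : ℝ) / 2) *
        Real.exp (σm * r ^ 2 + σp * r ^ 2 / 3 + Λ / 4) * r ^ m :=
  stmt_4_general μ Ω m r τb σp σm Λ hr hτb l hl hint hrv Vol hV0 hVd
end

section
/- Suppose w : X × [t₀, 0] → ℝ is positive with supremum M = sup_{X×[t₀,0]} w, and suppose the Gaussian-type gradient estimate w(x,0) ≥ w(x₀,0)·exp(−d²/(4|t₀|) − (d/√|t₀|)·√(log(M/w(x₀,0)))) holds, where d = d(x,x₀) at time 0. If t₀ = -r²/4, d ≤ r, w(x₀,0) ≥ (4π)^{-m/2} e^{-σ₊r²/3} r^{-m}, and M ≤ (4π·(3r²/4))^{-m/2} e^{B + σ₋·(3r²/4)}, then w(x,0) ≥ (4π)^{-m/2} e^{-1 - σ₊r²/3 - 2√(B + (σ₋ + σ₊/3)r² + (m/2)log(4/3))} · r^{-m}. -/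
open Real

/-!
The on-diagonal lower bound for `w(x₀,0)` and the `L^∞` bound for `M` at scale `3r²/4` give
`log (M / w(x₀,0)) ≤ Q := B + (σ₋ + σ₊/3) r² + (m/2) log (4/3)`, the factor `(3/4)^{-m/2}`
producing the `log (4/3)` term. With `|t₀| = r²/4` and `d ≤ r` the exponent of the gradient
estimate is then at least `-1 - 2 √Q`, and multiplying by the lower bound for `w(x₀,0)` gives
the claim.
-/

lemma rpow_neg_half_mul_sq {a r : ℝ} (ha : 0 ≤ a) (hr : 0 ≤ r) (s : ℝ) :
    (a * r ^ 2) ^ (-s / 2) = a ^ (-s / 2) * r ^ (-s) := by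
  rw [mul_rpow ha (by positivity), ← rpow_natCast r 2, ← rpow_mul hr]
  congr 2
  push_cast
  ring

lemma rpow_neg_half_eq_exp {x : ℝ} (hx : 0 < x) (s : ℝ) :
    x ^ (-s / 2) = exp (s / 2 * log x⁻¹) := by
  rw [rpow_def_of_pos hx, log_inv]
  ring_nf

lemma heatKernel_upper_bound_eq (m B σ : ℝ) {r : ℝ} (hr : 0 ≤ r) :
    (4 * π * (3 * r ^ 2 / 4)) ^ (-m / 2) * exp (B + σ * (3 * r ^ 2 / 4)) =
      (4 * π) ^ (-m / 2) * r ^ (-m) * exp (B + σ * (3 * r ^ 2 / 4) + m / 2 * log (4 / 3)) := by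
  rw [show 4 * π * (3 * r ^ 2 / 4) = 4 * π * (3 / 4) * r ^ 2 by ring,
    rpow_neg_half_mul_sq (by positivity) hr, mul_rpow (by positivity) (by norm_num),
    rpow_neg_half_eq_exp (by norm_num : (0 : ℝ) < 3 / 4)]
  norm_num [exp_add]
  ring

lemma log_sup_div_le {w0 M r B σp σm : ℝ} {m : ℕ} (hr : 0 < r) (hσm : 0 ≤ σm)
    (hw0 : 0 < w0) (hw0M : w0 ≤ M)
    (hlow : (4 * π) ^ (-(m : ℝ) / 2) * exp (-σp * r ^ 2 / 3) * r ^ (-(m : ℝ)) ≤ w0)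
    (hup : M ≤ (4 * π * (3 * r ^ 2 / 4)) ^ (-(m : ℝ) / 2) * exp (B + σm * (3 * r ^ 2 / 4))) :
    log (M / w0) ≤ B + (σm + σp / 3) * r ^ 2 + (m / 2) * log (4 / 3) := by
  set A := (4 * π) ^ (-(m : ℝ) / 2) * r ^ (-(m : ℝ))
  set X := B + σm * (3 * r ^ 2 / 4) + m / 2 * log (4 / 3) with hX
  have hA : 0 < A := by positivity
  have hM : M ≤ A * exp X := hup.trans_eq (heatKernel_upper_bound_eq _ _ _ hr.le)
  have hw0_ge : A * exp (-σp * r ^ 2 / 3) ≤ w0 := by linarith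
  calc log (M / w0) ≤ log (A * exp X / (A * exp (-σp * r ^ 2 / 3))) :=
        log_le_log (div_pos (hw0.trans_le hw0M) hw0)
          (div_le_div₀ (by positivity) hM (by positivity) hw0_ge)
    _ = X + σp * r ^ 2 / 3 := by
        rw [mul_div_mul_left _ _ hA.ne', ← exp_sub, log_exp]
        ring
    _ ≤ B + (σm + σp / 3) * r ^ 2 + (m / 2) * log (4 / 3) := by
        rw [hX]
        linarith [mul_nonneg hσm (sq_nonneg r)]

lemma neg_one_sub_two_sqrt_le {d t L Q : ℝ} (ht : 0 < t) (hd : d ^ 2 ≤ 4 * t)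
    (hLQ : L ≤ Q) :
    -1 - 2 * √Q ≤ -(d ^ 2) / (4 * t) - d / √t * √L := by
  have hsq : d ^ 2 / (4 * t) ≤ 1 := (div_le_one (by positivity)).2 hd
  have hd_le : d / √t ≤ 2 := by
    rw [div_le_iff₀ (sqrt_pos.2 ht)]
    nlinarith [sq_sqrt ht.le, sqrt_nonneg t]
  have hprod : d / √t * √L ≤ 2 * √Q :=
    mul_le_mul hd_le (sqrt_le_sqrt hLQ) (sqrt_nonneg _) zero_le_two
  rw [neg_div]
  linarith

theorem stmt_12_general (w0 wx M d r B σp σm : ℝ) (m : ℕ)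
    (hr : 0 < r) (hd0 : 0 ≤ d) (hd : d ≤ r)
    (hσm : 0 ≤ σm)
    (hw0 : 0 < w0) (hw0M : w0 ≤ M)
    (hgrad : w0 * Real.exp (-(d ^ 2) / (4 * (r ^ 2 / 4)) -
        (d / Real.sqrt (r ^ 2 / 4)) * Real.sqrt (Real.log (M / w0))) ≤ wx)
    (hlow : (4 * π) ^ (-(m : ℝ) / 2) * Real.exp (-σp * r ^ 2 / 3) * r ^ (-(m : ℝ)) ≤ w0)
    (hup : M ≤ (4 * π * (3 * r ^ 2 / 4)) ^ (-(m : ℝ) / 2) *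
        Real.exp (B + σm * (3 * r ^ 2 / 4))) :
    (4 * π) ^ (-(m : ℝ) / 2) *
        Real.exp (-1 - σp * r ^ 2 / 3 -
          2 * Real.sqrt (B + (σm + σp / 3) * r ^ 2 + ((m : ℝ) / 2) * Real.log (4 / 3))) *
        r ^ (-(m : ℝ)) ≤ wx := by
  set Q := B + (σm + σp / 3) * r ^ 2 + ((m : ℝ) / 2) * Real.log (4 / 3)
  have hd_sq : d ^ 2 ≤ 4 * (r ^ 2 / 4) := by nlinarith
  have hexponent := neg_one_sub_two_sqrt_le (by positivity) hd_sq
    (log_sup_div_le hr hσm hw0 hw0M hlow hup)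
  calc (4 * π) ^ (-(m : ℝ) / 2) * exp (-1 - σp * r ^ 2 / 3 - 2 * √Q) * r ^ (-(m : ℝ))
      = (4 * π) ^ (-(m : ℝ) / 2) * exp (-σp * r ^ 2 / 3) * r ^ (-(m : ℝ)) *
          exp (-1 - 2 * √Q) := by
        rw [show -1 - σp * r ^ 2 / 3 - 2 * √Q = -σp * r ^ 2 / 3 + (-1 - 2 * √Q) by ring,
          exp_add]
        ring
    _ ≤ w0 * exp (-(d ^ 2) / (4 * (r ^ 2 / 4)) - d / √(r ^ 2 / 4) * √(log (M / w0))) :=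
        mul_le_mul hlow (exp_le_exp.2 hexponent) (exp_pos _).le hw0.le
    _ ≤ wx := hgrad

/-- Combining the on-diagonal lower bound, the `L^∞` upper bound and the Gaussian-type
gradient estimate (with `t₀ = -r²/4`, `d ≤ r`) to get the pointwise lower bound for the
heat kernel `w` at time `0` on the ball of radius `r`.  Here `w0 = w(x₀,0)`,
`wx = w(x,0)`, `d = d(x,x₀)` and `M = sup w`. -/
theorem stmt_12 (w0 wx M d r B σp σm : ℝ) (m : ℕ)
    (hr : 0 < r) (hd0 : 0 ≤ d) (hd : d ≤ r)
    (hσp : 0 ≤ σp) (hσm : 0 ≤ σm)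
    (hw0 : 0 < w0) (hw0M : w0 ≤ M)
    (hgrad : w0 * Real.exp (-(d ^ 2) / (4 * (r ^ 2 / 4)) -
        (d / Real.sqrt (r ^ 2 / 4)) * Real.sqrt (Real.log (M / w0))) ≤ wx)
    (hlow : (4 * π) ^ (-(m : ℝ) / 2) * Real.exp (-σp * r ^ 2 / 3) * r ^ (-(m : ℝ)) ≤ w0)
    (hup : M ≤ (4 * π * (3 * r ^ 2 / 4)) ^ (-(m : ℝ) / 2) *
        Real.exp (B + σm * (3 * r ^ 2 / 4))) :
    (4 * π) ^ (-(m : ℝ) / 2) *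
        Real.exp (-1 - σp * r ^ 2 / 3 -
          2 * Real.sqrt (B + (σm + σp / 3) * r ^ 2 + ((m : ℝ) / 2) * Real.log (4 / 3))) *
        r ^ (-(m : ℝ)) ≤ wx :=
  stmt_12_general w0 wx M d r B σp σm m hr hd0 hd hσm hw0 hw0M hgrad hlow hup
end
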